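/- Interpolation inequality for ψ-ellipsoidal functions: let ψ: [0,∞) → ℝ ∪ {+∞} be convex with ψ(0)=0, let A₁, A₂ be positive-definite symmetric d×d matrices, a₁, a₂ ∈ ℝ^d, α₁, α₂ > 0, and β₁,β₂>0 with β₁+β₂=1. Set A = β₁A₁ + β₂A₂, α = α₁^{β₁}α₂^{β₂}, and a = A⁻¹(β₁A₁a₁ + β₂A₂a₂). Then for all x ∈ ℝ^d, (α₁e^{-ψ(|A₁(x-a₁)|)})^{β₁} · (α₂e^{-ψ(|A₂(x-a₂)|)})^{β₂} ≤ α e^{-ψ(|A(x-a)|)}. -/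

import Mathlib

/-!
With `A = β₁A₁ + β₂A₂` invertible (it is positive definite) and `a` the weighted centre,
`A(x - a) = β₁A₁(x - a₁) + β₂A₂(x - a₂)`. Since `ψ` is convex and nondecreasing on `[0, ∞)`,
`ψ ∘ ‖·‖` is convex, so `ψ(|A(x - a)|) ≤ β₁ψ(|A₁(x - a₁)|) + β₂ψ(|A₂(x - a₂)|)`; exponentiating
this inequality gives the claim.
-/

/-- Identity coercion from plain vectors to Euclidean space (they are definitionally equal). -/
def toE {d : ℕ} (v : Fin d → ℝ) : EuclideanSpace ℝ (Fin d) := WithLp.toLp 2 v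

open Matrix in
theorem Matrix.smul_add_smul_mulVec_sub_inv_mulVec {n R : Type*} [Fintype n] [DecidableEq n]
    [CommRing R] {A₁ A₂ : Matrix n n R} {β₁ β₂ : R} (hA : IsUnit (β₁ • A₁ + β₂ • A₂))
    (x a₁ a₂ : n → R) :
    (β₁ • A₁ + β₂ • A₂) *ᵥ (x - (β₁ • A₁ + β₂ • A₂)⁻¹ *ᵥ (β₁ • A₁ *ᵥ a₁ + β₂ • A₂ *ᵥ a₂)) =
      β₁ • A₁ *ᵥ (x - a₁) + β₂ • A₂ *ᵥ (x - a₂) := by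
  rw [mulVec_sub, mulVec_mulVec, mul_nonsing_inv _ ((isUnit_iff_isUnit_det _).mp hA),
    one_mulVec, add_mulVec, smul_mulVec, smul_mulVec, mulVec_sub, mulVec_sub]
  module

theorem ConvexOn.comp_norm_smul_add_smul_le {E : Type*} [SeminormedAddCommGroup E]
    [NormedSpace ℝ E] {ψ : ℝ → ℝ} (hconv : ConvexOn ℝ (Set.Ici 0) ψ)
    (hmono : MonotoneOn ψ (Set.Ici 0)) (u v : E) {β₁ β₂ : ℝ} (hβ₁ : 0 ≤ β₁) (hβ₂ : 0 ≤ β₂)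
    (hβ : β₁ + β₂ = 1) :
    ψ ‖β₁ • u + β₂ • v‖ ≤ β₁ * ψ ‖u‖ + β₂ * ψ ‖v‖ :=
  calc ψ ‖β₁ • u + β₂ • v‖ ≤ ψ (β₁ * ‖u‖ + β₂ * ‖v‖) := by
        refine hmono (norm_nonneg _) (Set.mem_Ici.mpr (by positivity)) ?_
        simpa [norm_smul, abs_of_nonneg hβ₁, abs_of_nonneg hβ₂] using norm_add_le (β₁ • u) (β₂ • v)
    _ ≤ β₁ * ψ ‖u‖ + β₂ * ψ ‖v‖ :=
        hconv.2 (norm_nonneg u) (norm_nonneg v) hβ₁ hβ₂ hβ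

theorem mul_exp_neg_rpow_mul_mul_exp_neg_rpow_le {α₁ α₂ β₁ β₂ s₁ s₂ t : ℝ} (hα₁ : 0 ≤ α₁)
    (hα₂ : 0 ≤ α₂) (ht : t ≤ β₁ * s₁ + β₂ * s₂) :
    (α₁ * Real.exp (-s₁)) ^ β₁ * (α₂ * Real.exp (-s₂)) ^ β₂ ≤
      α₁ ^ β₁ * α₂ ^ β₂ * Real.exp (-t) := by
  rw [Real.mul_rpow hα₁ (Real.exp_nonneg _), Real.mul_rpow hα₂ (Real.exp_nonneg _),
    ← Real.exp_mul, ← Real.exp_mul, mul_mul_mul_comm, ← Real.exp_add]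
  gcongr
  linarith

theorem stmt_8_general (d : ℕ) (ψ : ℝ → ℝ)
    (hconv : ConvexOn ℝ (Set.Ici 0) ψ)
    (hmono : ∀ x y : ℝ, 0 ≤ x → x ≤ y → ψ x ≤ ψ y)
    (A₁ A₂ : Matrix (Fin d) (Fin d) ℝ) (h₁ : A₁.PosDef) (h₂ : A₂.PosDef)
    (a₁ a₂ : EuclideanSpace ℝ (Fin d)) (α₁ α₂ β₁ β₂ : ℝ)
    (hα₁ : 0 < α₁) (hα₂ : 0 < α₂) (hβ₁ : 0 < β₁) (hβ₂ : 0 < β₂) (hβ : β₁ + β₂ = 1) :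
    ∀ x : EuclideanSpace ℝ (Fin d),
      (α₁ * Real.exp (-ψ ‖toE (A₁.mulVec (x - a₁))‖)) ^ β₁ *
        (α₂ * Real.exp (-ψ ‖toE (A₂.mulVec (x - a₂))‖)) ^ β₂ ≤
      (α₁ ^ β₁ * α₂ ^ β₂) *
        Real.exp (-ψ ‖toE ((β₁ • A₁ + β₂ • A₂).mulVec
          (x - toE ((β₁ • A₁ + β₂ • A₂)⁻¹.mulVec
            (β₁ • A₁.mulVec a₁ + β₂ • A₂.mulVec a₂))))‖) := by
  intro x
  have hA : IsUnit (β₁ • A₁ + β₂ • A₂) := ((h₁.smul hβ₁).add (h₂.smul hβ₂)).isUnit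
  have hcenter : toE ((β₁ • A₁ + β₂ • A₂).mulVec
      (x - toE ((β₁ • A₁ + β₂ • A₂)⁻¹.mulVec (β₁ • A₁.mulVec a₁ + β₂ • A₂.mulVec a₂)))) =
      β₁ • toE (A₁.mulVec (x - a₁)) + β₂ • toE (A₂.mulVec (x - a₂)) :=
    congrArg toE (Matrix.smul_add_smul_mulVec_sub_inv_mulVec hA x a₁ a₂)
  refine mul_exp_neg_rpow_mul_mul_exp_neg_rpow_le hα₁.le hα₂.le ?_
  rw [hcenter]
  exact hconv.comp_norm_smul_add_smul_le (fun s hs t _ hst ↦ hmono s t hs hst) _ _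
    hβ₁.le hβ₂.le hβ

theorem stmt_8 (d : ℕ) (ψ : ℝ → ℝ)
    (hconv : ConvexOn ℝ (Set.Ici 0) ψ) (hψ0 : ψ 0 = 0)
    (hmono : ∀ x y : ℝ, 0 ≤ x → x ≤ y → ψ x ≤ ψ y)
    (A₁ A₂ : Matrix (Fin d) (Fin d) ℝ) (h₁ : A₁.PosDef) (h₂ : A₂.PosDef)
    (a₁ a₂ : EuclideanSpace ℝ (Fin d)) (α₁ α₂ β₁ β₂ : ℝ)
    (hα₁ : 0 < α₁) (hα₂ : 0 < α₂) (hβ₁ : 0 < β₁) (hβ₂ : 0 < β₂) (hβ : β₁ + β₂ = 1) :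
    ∀ x : EuclideanSpace ℝ (Fin d),
      (α₁ * Real.exp (-ψ ‖toE (A₁.mulVec (x - a₁))‖)) ^ β₁ *
        (α₂ * Real.exp (-ψ ‖toE (A₂.mulVec (x - a₂))‖)) ^ β₂ ≤
      (α₁ ^ β₁ * α₂ ^ β₂) *
        Real.exp (-ψ ‖toE ((β₁ • A₁ + β₂ • A₂).mulVec
          (x - toE ((β₁ • A₁ + β₂ • A₂)⁻¹.mulVec
            (β₁ • A₁.mulVec a₁ + β₂ • A₂.mulVec a₂))))‖) :=
  stmt_8_general d ψ hconv hmono A₁ A₂ h₁ h₂ a₁ a₂ α₁ α₂ β₁ β₂ hα₁ hα₂ hβ₁ hβ₂ hβ
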